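/- Suppose Δ is an h-transverse polygon with upper edge length d_0 ≥ δ, right directions c_1 > ... > c_n ≥ 0 with d_0 + c_1 ≥ 2δ, all left directions 0, and first divergence entries a_0 = d_0, a_1 = r_1 where r is a permutation of the right directions with cogenus δ(r) ≤ δ. Then for any collection of templates Γ with δ(Γ) = δ − δ(r) and any template Γ_i in the collection and any 1 ≤ j ≤ l(Γ_i), we have a_0 + a_1 ≥ κ_j(Γ_i). -/

import Mathlib

/-!
An edge `i → k` of weight `w` contributes `w` to `κ_j` and `(k - i) w - 1 ≥ w / 2` to the cogenus
(short edges have weight at least 2), so `κ_j(Γᵢ) ≤ 2 δ(Γᵢ) ≤ 2 (δ - δ(r))`. Since `c_1` occurs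
in `r`, the pair formed by the first entry and an occurrence of `c_1` gives `δ(r) ≥ c_1 - r_1`.
Hence `κ_j(Γᵢ) ≤ 2δ - 2δ(r) ≤ d_0 + c_1 - 2δ(r) ≤ d_0 + r_1 - δ(r) ≤ d_0 + r_1`.
-/

/-- A template: a directed graph on vertices `{0, ..., l}` (`l ≥ 1`), possibly with
multiple edges, recorded as a multiset of triples `(i, j, w)` meaning an edge `i → j`
of weight `w`, such that `i < j`, `j ≤ l`, `w > 0`, every edge between consecutive
vertices has weight at least 2, and every intermediate vertex is covered by an edge. -/
structure Template where
  l : ℕ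
  edges : Multiset (ℕ × ℕ × ℕ)
  one_le_l : 1 ≤ l
  lt_of_mem : ∀ e ∈ edges, e.1 < e.2.1
  le_l : ∀ e ∈ edges, e.2.1 ≤ l
  w_pos : ∀ e ∈ edges, 0 < e.2.2
  short_two : ∀ e ∈ edges, e.2.1 = e.1 + 1 → 2 ≤ e.2.2
  covered : ∀ j, 1 ≤ j → j + 1 ≤ l → ∃ e ∈ edges, e.1 < j ∧ j < e.2.1

/-- The cogenus `δ(Γ) = ∑_{edges i→j} ((j−i)·w(e) − 1)`. -/
def Template.cogenus (Γ : Template) : ℕ :=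
  (Γ.edges.map (fun e => (e.2.1 - e.1) * e.2.2 - 1)).sum

/-- `κ_j(Γ)`: the sum of the weights of edges `i → k` with `i < j ≤ k`. -/
def Template.kappa (Γ : Template) (j : ℕ) : ℕ :=
  ((Γ.edges.filter (fun e => e.1 < j ∧ j ≤ e.2.1)).map (fun e => e.2.2)).sum

/-- The multiplicity `μ(Γ) = ∏_e w(e)²`. -/
def Template.mult (Γ : Template) : ℕ :=
  (Γ.edges.map (fun e => e.2.2 ^ 2)).prod

/-- The cogenus `δ(r) = ∑_{i<j, r_i<r_j} (r_j − r_i)` of a sequence `r` of length `M`. -/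
def deltaSeq (M : ℕ) (r : ℕ → ℤ) : ℤ :=
  ∑ p ∈ (Finset.range M ×ˢ Finset.range M).filter
      (fun p => p.1 < p.2 ∧ r p.1 < r p.2), (r p.2 - r p.1)

lemma weight_le_two_mul_edge_cogenus {i k w : ℕ} (hik : i < k) (hw : 0 < w)
    (hshort : k = i + 1 → 2 ≤ w) : w ≤ 2 * ((k - i) * w - 1) := by
  rcases Nat.lt_or_ge (i + 1) k with hlong | hle
  · have : 2 * w ≤ (k - i) * w := Nat.mul_le_mul_right _ (by omega)
    omega
  · have hk : k = i + 1 := by omega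
    have := hshort hk
    rw [hk, Nat.add_sub_cancel_left, one_mul]
    omega

lemma Template.kappa_le_two_mul_cogenus (Γ : Template) (j : ℕ) : Γ.kappa j ≤ 2 * Γ.cogenus := by
  classical
  set p : ℕ × ℕ × ℕ → Prop := fun e => e.1 < j ∧ j ≤ e.2.1
  set g : ℕ × ℕ × ℕ → ℕ := fun e => 2 * ((e.2.1 - e.1) * e.2.2 - 1)
  calc Γ.kappa j ≤ ((Γ.edges.filter p).map g).sum :=
        Multiset.sum_map_le_sum_map _ _ fun e he =>
          have he := Multiset.mem_of_mem_filter he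
          weight_le_two_mul_edge_cogenus (Γ.lt_of_mem e he) (Γ.w_pos e he) (Γ.short_two e he)
    _ ≤ ((Γ.edges.filter p).map g).sum + ((Γ.edges.filter (¬ p ·)).map g).sum := Nat.le_add_right _ _
    _ = (Γ.edges.map g).sum := by
        rw [← Multiset.sum_add, ← Multiset.map_add, Multiset.filter_add_not]
    _ = 2 * Γ.cogenus := Multiset.sum_map_mul_left

lemma deltaSeq_nonneg (M : ℕ) (r : ℕ → ℤ) : 0 ≤ deltaSeq M r :=
  Finset.sum_nonneg fun _ hp => sub_nonneg.mpr (Finset.mem_filter.mp hp).2.2.le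

lemma sub_le_deltaSeq {M i k : ℕ} (r : ℕ → ℤ) (hik : i ≤ k) (hk : k < M) :
    r k - r i ≤ deltaSeq M r := by
  by_cases hlt : i < k ∧ r i < r k
  · have hmem : (i, k) ∈ (Finset.range M ×ˢ Finset.range M).filter
        (fun p => p.1 < p.2 ∧ r p.1 < r p.2) :=
      Finset.mem_filter.mpr ⟨Finset.mem_product.mpr
        ⟨Finset.mem_range.mpr (hik.trans_lt hk), Finset.mem_range.mpr hk⟩, hlt⟩
    exact Finset.single_le_sum (f := fun p : ℕ × ℕ => r p.2 - r p.1)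
      (fun _ hp => sub_nonneg.mpr (Finset.mem_filter.mp hp).2.2.le) hmem
  · have hle : r k ≤ r i := by
      rcases hik.lt_or_eq with h | rfl
      exacts [not_lt.mp fun h' => hlt ⟨h, h'⟩, le_rfl]
    linarith [deltaSeq_nonneg M r]

theorem kappa_le_a0_add_a1_general (δ n M d0 : ℕ) (c : ℕ → ℤ) (d : ℕ → ℕ) (r : ℕ → ℤ)
    (Γs : List Template) (Γi : Template) (hmem : Γi ∈ Γs)
    (j : ℕ)
    (hn : 1 ≤ n)
    (hd : ∀ i, 1 ≤ i → i ≤ n → 1 ≤ d i)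
    (hcount : ∀ i, 1 ≤ i → i ≤ n →
      ((Finset.range M).filter (fun m => r m = c i)).card = d i)
    (hd0c : 2 * (δ : ℤ) ≤ (d0 : ℤ) + c 1)
    (hΓ : ((Γs.map Template.cogenus).sum : ℤ) = (δ : ℤ) - deltaSeq M r) :
    (Γi.kappa j : ℤ) ≤ (d0 : ℤ) + r 0 := by
  have hκ : (Γi.kappa j : ℤ) ≤ 2 * Γi.cogenus := by
    exact_mod_cast Γi.kappa_le_two_mul_cogenus j
  have hcog : (Γi.cogenus : ℤ) ≤ (Γs.map Template.cogenus).sum := by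
    exact_mod_cast List.le_sum_of_mem (List.mem_map_of_mem hmem)
  obtain ⟨m, hm⟩ : ((Finset.range M).filter (fun m => r m = c 1)).Nonempty := by
    rw [← Finset.card_pos, hcount 1 le_rfl hn]
    exact hd 1 le_rfl hn
  obtain ⟨hmM, hrm⟩ := Finset.mem_filter.mp hm
  have hr : c 1 - r 0 ≤ deltaSeq M r := hrm ▸ sub_le_deltaSeq r m.zero_le (Finset.mem_range.mp hmM)
  linarith [deltaSeq_nonneg M r]

/-- In the first-quadrant setting with `d_0 ≥ δ`, `d_0 + c_1 ≥ 2δ`, right directions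
`c_1 > ⋯ > c_n ≥ 0` with multiplicities `d_i`, a permutation `r` of the right directions
with `δ(r) ≤ δ`, and a collection of templates `Γs` with total cogenus `δ − δ(r)`:
every template `Γᵢ` in the collection and every `1 ≤ j ≤ l(Γᵢ)` satisfy
`κ_j(Γᵢ) ≤ a_0 + a_1 = d_0 + r_1`. -/
theorem kappa_le_a0_add_a1 (δ n M d0 : ℕ) (c : ℕ → ℤ) (d : ℕ → ℕ) (r : ℕ → ℤ)
    (Γs : List Template) (Γi : Template) (hmem : Γi ∈ Γs)
    (j : ℕ) (hj1 : 1 ≤ j) (hj2 : j ≤ Γi.l)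
    (hn : 1 ≤ n)
    (hc : ∀ i i', 1 ≤ i → i < i' → i' ≤ n → c i' < c i)
    (hcnn : ∀ i, 1 ≤ i → i ≤ n → 0 ≤ c i)
    (hd : ∀ i, 1 ≤ i → i ≤ n → 1 ≤ d i)
    (hM : M = ∑ i ∈ Finset.Icc 1 n, d i)
    (hcount : ∀ i, 1 ≤ i → i ≤ n →
      ((Finset.range M).filter (fun m => r m = c i)).card = d i)
    (hd0 : (δ : ℤ) ≤ (d0 : ℤ))
    (hd0c : 2 * (δ : ℤ) ≤ (d0 : ℤ) + c 1)
    (hδr : deltaSeq M r ≤ (δ : ℤ))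
    (hΓ : ((Γs.map Template.cogenus).sum : ℤ) = (δ : ℤ) - deltaSeq M r) :
    (Γi.kappa j : ℤ) ≤ (d0 : ℤ) + r 0 :=
  kappa_le_a0_add_a1_general δ n M d0 c d r Γs Γi hmem j hn hd hcount hd0c hΓ
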